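/- Let α be a composition of n and β a composition of m (n, m ≥ 1), N := n+m, and D := Des(α) ∪ {n+d : d ∈ Des(β)} ⊆ {1,…,N−1}. Let V_• , V_pair, V_⊙ be the subspaces of the group algebra ℚ[S_N] spanned respectively by W_• := {w ∈ S_N : Des(w) = D ∪ {n}}, W_pair := {w ∈ S_N : Des(w) \ {n} = D}, and W_⊙ := {w ∈ S_N : Des(w) = D}. Then: (a) for every i ∈ {1,…,N−1}, the operator π̄_i^{D∪{n}} maps V_• into V_• and V_pair into V_pair, and the operator π̄_i^{D} maps V_⊙ into V_⊙; (b) the inclusion map ∂ : V_• → V_pair and the linear map μ : V_pair → V_⊙ defined on basis elements by μ(w) := w if n ∉ Des(w) and μ(w) := 0 if n ∈ Des(w), satisfy ∂ ∘ π̄_i^{D∪{n}} = π̄_i^{D∪{n}} ∘ ∂ and μ ∘ π̄_i^{D∪{n}} = π̄_i^{D} ∘ μ for all i ∈ {1,…,N−1}. (This is the 0-Hecke equivariance of the concatenation and near-concatenation maps, in the word model for standard ribbon tableaux.) -/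

import Mathlib

open scoped BigOperators

/-- The descent set of a composition `α = (α₁,…,α_ℓ)`: the partial sums
`α₁+⋯+α_i` for `1 ≤ i < ℓ`. -/
def Des (α : List ℕ) : Finset ℕ :=
  ((List.range (α.length - 1)).map (fun i => (α.take (i + 1)).sum)).toFinset

/-- The descent set of a permutation `w` of `{1,…,N}` (realized as `Equiv.Perm (Fin N)` in
0-based indexing): the set of `i ∈ {1,…,N−1}` with `w(i) > w(i+1)` in one-line notation. -/
def permDes {N : ℕ} (w : Equiv.Perm (Fin N)) : Finset ℕ :=
  Finset.image (fun i : Fin (N - 1) => (i : ℕ) + 1)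
    (Finset.univ.filter
      (fun i : Fin (N - 1) => w ⟨(i : ℕ) + 1, by omega⟩ < w ⟨(i : ℕ), by omega⟩))

/-- The group algebra `ℚ[S_N]`, as the ℚ-vector space with basis `S_N`. -/
abbrev QS (N : ℕ) : Type := Equiv.Perm (Fin N) →₀ ℚ

/-- The row index `r_E(p) = 1 + #{e ∈ E : e < p}` of a (1-based) position `p ∈ {1,…,N}`
with respect to a set `E` of row breaks. -/
def rowIdx (E : Finset ℕ) (p : ℕ) : ℕ := 1 + (E.filter (fun e => e < p)).card

/-- The value of the 0-Hecke operator `π̄ᵢᴱ` on the basis permutation `w` (for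
`1 ≤ i < N`; junk value `0` outside that range): `−w` if `r_E(w⁻¹(i)) > r_E(w⁻¹(i+1))`,
`0` if they are equal, and `t_{i,i+1} ∘ w` if `r_E(w⁻¹(i)) < r_E(w⁻¹(i+1))`. -/
noncomputable def pibarBasis (N : ℕ) (E : Finset ℕ) (i : ℕ)
    (w : Equiv.Perm (Fin N)) : QS N :=
  if h : 1 ≤ i ∧ i < N then
    let vi : Fin N := ⟨i - 1, by omega⟩        -- the value `i`, 0-based
    let vi1 : Fin N := ⟨i, h.2⟩                -- the value `i+1`, 0-based
    let ri : ℕ := rowIdx E (((w⁻¹) vi : ℕ) + 1)    -- row of position `w⁻¹(i)`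
    let ri1 : ℕ := rowIdx E (((w⁻¹) vi1 : ℕ) + 1)  -- row of position `w⁻¹(i+1)`
    if ri1 < ri then - Finsupp.single w (1 : ℚ)
    else if ri = ri1 then 0
    else Finsupp.single (Equiv.swap vi vi1 * w) (1 : ℚ)
  else 0

/-- The 0-Hecke operator `π̄ᵢᴱ` as a ℚ-linear endomorphism of `ℚ[S_N]`. -/
noncomputable def pibar (N : ℕ) (E : Finset ℕ) (i : ℕ) : QS N →ₗ[ℚ] QS N :=
  Finsupp.lsum ℚ (fun w => LinearMap.toSpanSingleton ℚ (QS N) (pibarBasis N E i w))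

/-- The map `μ`, on basis permutations: `μ(w) = w` if `n ∉ Des(w)` and `μ(w) = 0` if
`n ∈ Des(w)` (its restriction to `V_pair` is the near-concatenation map of the statement). -/
noncomputable def muMap (N n : ℕ) : QS N →ₗ[ℚ] QS N :=
  Finsupp.lsum ℚ (fun w => LinearMap.toSpanSingleton ℚ (QS N)
    (if n ∈ permDes w then 0 else Finsupp.single w (1 : ℚ)))


lemma mem_permDes {N : ℕ} (w : Equiv.Perm (Fin N)) (j : ℕ) :
    j ∈ permDes w ↔ ∃ (h2 : j < N), 1 ≤ j ∧ w ⟨j, h2⟩ < w ⟨j - 1, by omega⟩ := by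
  unfold permDes
  simp only [Finset.mem_image, Finset.mem_filter, Finset.mem_univ, true_and]
  constructor
  · rintro ⟨i, hi, rfl⟩
    have hiN : (i : ℕ) < N - 1 := i.isLt
    refine ⟨by omega, by omega, ?_⟩
    have e0 : (⟨(i:ℕ) + 1 - 1, by omega⟩ : Fin N) = ⟨(i:ℕ), by omega⟩ := by
      ext; simp
    rw [e0]; exact hi
  · rintro ⟨h2, h1, hlt⟩
    have hN : 1 ≤ N := by omega
    refine ⟨⟨j - 1, by omega⟩, ?_, by simp only [Fin.val_mk]; omega⟩
    simp only [Fin.val_mk]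
    have e1 : (⟨j - 1 + 1, by omega⟩ : Fin N) = ⟨j, h2⟩ := by ext; simp only [Fin.val_mk]; omega
    rw [e1]; exact hlt

lemma swap_consec_lt {N : ℕ} (a b v1 v2 : Fin N) (hab : (a:ℕ) + 1 = b)
    (h1 : ¬(v1 = a ∧ v2 = b)) (h2 : ¬(v1 = b ∧ v2 = a)) :
    (Equiv.swap a b v1 < Equiv.swap a b v2 ↔ v1 < v2) := by
  have hfe : ∀ x y : Fin N, x = y ↔ (x:ℕ) = y := by
    intro x y; rw [Fin.ext_iff]
  by_cases e1a : v1 = a <;> by_cases e1b : v1 = b <;>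
    by_cases e2a : v2 = a <;> by_cases e2b : v2 = b <;>
    simp only [e1a, e1b, e2a, e2b, Equiv.swap_apply_left, Equiv.swap_apply_right,
      Equiv.swap_apply_of_ne_of_ne, Fin.lt_def, *, ne_eq, not_false_iff] <;>
    first
      | omega
      | (rw [Equiv.swap_apply_of_ne_of_ne e2a e2b] <;> rw [hfe] at * <;> omega)
      | (rw [Equiv.swap_apply_of_ne_of_ne e1a e1b] <;> rw [hfe] at * <;> omega)
      | (rw [Equiv.swap_apply_of_ne_of_ne e1a e1b, Equiv.swap_apply_of_ne_of_ne e2a e2b] <;>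
          rw [hfe] at * <;> omega)
      | (rw [hfe] at * <;> omega)
      | tauto

lemma permDes_swap_nonadj {N : ℕ} (w : Equiv.Perm (Fin N)) (a b : Fin N)
    (hab : (a:ℕ) + 1 = b)
    (hq : ((w⁻¹ b : Fin N) : ℕ) ≠ ((w⁻¹ a : Fin N) : ℕ) + 1)
    (hp : ((w⁻¹ a : Fin N) : ℕ) ≠ ((w⁻¹ b : Fin N) : ℕ) + 1) :
    permDes (Equiv.swap a b * w) = permDes w := by
  ext j
  rw [mem_permDes, mem_permDes]
  constructor <;> rintro ⟨h2, h1, hlt⟩ <;> refine ⟨h2, h1, ?_⟩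
  · rw [show ((Equiv.swap a b * w) ⟨j, h2⟩ : Fin N) = Equiv.swap a b (w ⟨j, h2⟩) from rfl,
      show ((Equiv.swap a b * w) ⟨j - 1, by omega⟩ : Fin N)
        = Equiv.swap a b (w ⟨j - 1, by omega⟩) from rfl] at hlt
    rw [← swap_consec_lt a b (w ⟨j, h2⟩) (w ⟨j - 1, by omega⟩) hab ?_ ?_]
    · exact hlt
    · rintro ⟨ea, eb⟩
      apply hp
      have : w⁻¹ a = ⟨j, h2⟩ := Equiv.Perm.inv_eq_iff_eq.mpr ea.symm
      have h2' : w⁻¹ b = ⟨j - 1, by omega⟩ := Equiv.Perm.inv_eq_iff_eq.mpr eb.symm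
      rw [this, h2']; simp; omega
    · rintro ⟨eb, ea⟩
      apply hq
      have : w⁻¹ b = ⟨j, h2⟩ := Equiv.Perm.inv_eq_iff_eq.mpr eb.symm
      have h2' : w⁻¹ a = ⟨j - 1, by omega⟩ := Equiv.Perm.inv_eq_iff_eq.mpr ea.symm
      rw [this, h2']; simp; omega
  · rw [show ((Equiv.swap a b * w) ⟨j, h2⟩ : Fin N) = Equiv.swap a b (w ⟨j, h2⟩) from rfl,
      show ((Equiv.swap a b * w) ⟨j - 1, by omega⟩ : Fin N)
        = Equiv.swap a b (w ⟨j - 1, by omega⟩) from rfl]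
    rw [swap_consec_lt a b (w ⟨j, h2⟩) (w ⟨j - 1, by omega⟩) hab ?_ ?_]
    · exact hlt
    · rintro ⟨ea, eb⟩
      apply hp
      have : w⁻¹ a = ⟨j, h2⟩ := Equiv.Perm.inv_eq_iff_eq.mpr ea.symm
      have h2' : w⁻¹ b = ⟨j - 1, by omega⟩ := Equiv.Perm.inv_eq_iff_eq.mpr eb.symm
      rw [this, h2']; simp; omega
    · rintro ⟨eb, ea⟩
      apply hq
      have : w⁻¹ b = ⟨j, h2⟩ := Equiv.Perm.inv_eq_iff_eq.mpr eb.symm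
      have h2' : w⁻¹ a = ⟨j - 1, by omega⟩ := Equiv.Perm.inv_eq_iff_eq.mpr ea.symm
      rw [this, h2']; simp; omega

set_option maxHeartbeats 1000000 in
lemma permDes_swap_adj {N : ℕ} (w : Equiv.Perm (Fin N)) (a b : Fin N)
    (hab : (a:ℕ) + 1 = b)
    (hq : ((w⁻¹ b : Fin N) : ℕ) = ((w⁻¹ a : Fin N) : ℕ) + 1) :
    (((w⁻¹ a : Fin N) : ℕ) + 1 ∉ permDes w) ∧
    permDes (Equiv.swap a b * w) = insert (((w⁻¹ a : Fin N) : ℕ) + 1) (permDes w) := by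
  obtain ⟨p, hp⟩ : ∃ p : ℕ, ((w⁻¹ a : Fin N) : ℕ) = p := ⟨_, rfl⟩
  rw [hp] at hq ⊢
  have hpN : p < N := hp ▸ (w⁻¹ a).isLt
  have hqN : p + 1 < N := hq ▸ (w⁻¹ b).isLt
  have hpval : w ⟨p, hpN⟩ = a := by
    have : (⟨p, hpN⟩ : Fin N) = w⁻¹ a := by ext; exact hp.symm
    rw [this]; simp
  have hqval : w ⟨p + 1, hqN⟩ = b := by
    have : (⟨p + 1, hqN⟩ : Fin N) = w⁻¹ b := by ext; exact hq.symm
    rw [this]; simp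
  have hvals : ∀ (j : ℕ) (hjN : j < N), j ≠ p → j ≠ p + 1 →
      w ⟨j, hjN⟩ ≠ a ∧ w ⟨j, hjN⟩ ≠ b := by
    intro j hjN hj1 hj2
    constructor
    · intro e
      have : (⟨j, hjN⟩ : Fin N) = w⁻¹ a := Equiv.Perm.eq_inv_iff_eq.mpr e
      apply hj1
      have := congrArg Fin.val this
      rw [hp] at this; exact this
    · intro e
      have : (⟨j, hjN⟩ : Fin N) = w⁻¹ b := Equiv.Perm.eq_inv_iff_eq.mpr e
      apply hj2
      have := congrArg Fin.val this
      rw [hq] at this; exact this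
  have hnotmem : p + 1 ∉ permDes w := by
    rw [mem_permDes]
    rintro ⟨h2, -, hlt⟩
    have e1 : (⟨p + 1 - 1, by omega⟩ : Fin N) = ⟨p, hpN⟩ := by ext; simp
    rw [e1, hpval] at hlt
    rw [show (⟨p + 1, h2⟩ : Fin N) = ⟨p + 1, hqN⟩ from rfl, hqval, Fin.lt_def] at hlt
    omega
  refine ⟨hnotmem, ?_⟩
  ext j
  rw [mem_permDes, Finset.mem_insert, mem_permDes]
  by_cases hj : j = p + 1
  · subst hj
    simp only [true_or, iff_true]
    refine ⟨hqN, by omega, ?_⟩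
    simp only [Equiv.Perm.mul_apply]
    have e1 : (⟨p + 1 - 1, by omega⟩ : Fin N) = ⟨p, hpN⟩ := by ext; simp
    rw [e1, hpval, show (⟨p + 1, hqN⟩ : Fin N) = ⟨p + 1, hqN⟩ from rfl, hqval,
      Equiv.swap_apply_left, Equiv.swap_apply_right, Fin.lt_def]
    omega
  · have hcongr : ∀ (h2 : j < N) (hha : 1 ≤ j),
        ((Equiv.swap a b * w) ⟨j, h2⟩ < (Equiv.swap a b * w) ⟨j - 1, by omega⟩)
          ↔ (w ⟨j, h2⟩ < w ⟨j - 1, by omega⟩) := by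
      intro h2 hha
      simp only [Equiv.Perm.mul_apply]
      apply swap_consec_lt a b _ _ hab
      · rintro ⟨ea, eb⟩
        have h3 : (⟨j - 1, by omega⟩ : Fin N) = w⁻¹ b := Equiv.Perm.eq_inv_iff_eq.mpr eb
        have h4 := congrArg Fin.val h3
        simp only [Fin.val_mk, hq] at h4
        have h5 : (⟨j, h2⟩ : Fin N) = w⁻¹ a := Equiv.Perm.eq_inv_iff_eq.mpr ea
        have h6 := congrArg Fin.val h5
        simp only [Fin.val_mk, hp] at h6
        omega
      · rintro ⟨eb, ea⟩
        have h3 : (⟨j, h2⟩ : Fin N) = w⁻¹ b := Equiv.Perm.eq_inv_iff_eq.mpr eb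
        have h4 := congrArg Fin.val h3
        simp only [Fin.val_mk, hq] at h4
        exact hj h4
    constructor
    · rintro ⟨h2, h1, hlt⟩
      exact Or.inr ⟨h2, h1, (hcongr h2 h1).mp hlt⟩
    · rintro (hj' | ⟨h2, h1, hlt⟩)
      · exact absurd hj' hj
      · exact ⟨h2, h1, (hcongr h2 h1).mpr hlt⟩

lemma mono_of_no_descent {N : ℕ} (w : Equiv.Perm (Fin N)) (p q : ℕ) (hq : q < N)
    (hpq : p < q) (h : ∀ j, p < j → j ≤ q → j ∉ permDes w) :
    w ⟨p, by omega⟩ < w ⟨q, hq⟩ := by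
  induction q with
  | zero => omega
  | succ r ih =>
    have hr : r < N := by omega
    have hstep : w ⟨r, hr⟩ < w ⟨r + 1, hq⟩ := by
      have hmem := h (r + 1) (by omega) (by omega)
      rw [mem_permDes] at hmem
      push_neg at hmem
      have := hmem hq (by omega)
      have e1 : (⟨r + 1 - 1, by omega⟩ : Fin N) = ⟨r, hr⟩ := by ext; simp
      rw [e1] at this
      refine lt_of_le_of_ne this (fun e => ?_)
      have := w.injective e
      rw [Fin.ext_iff] at this
      simp only [Fin.val_mk] at this
      omega
    rcases eq_or_ne p r with rfl | hpr
    · exact hstep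
    · exact lt_trans (ih hr (by omega) (fun j h1 h2 => h j h1 (by omega))) hstep

lemma rowIdx_mono (E : Finset ℕ) {x y : ℕ} (h : x ≤ y) : rowIdx E x ≤ rowIdx E y := by
  unfold rowIdx
  have hsub : E.filter (fun e => e < x) ⊆ E.filter (fun e => e < y) := by
    intro e he
    simp only [Finset.mem_filter] at he ⊢
    exact ⟨he.1, lt_of_lt_of_le he.2 h⟩
  exact Nat.add_le_add_left (Finset.card_le_card hsub) 1

lemma rowIdx_lt_iff (E : Finset ℕ) (x y : ℕ) :
    rowIdx E x < rowIdx E y ↔ ∃ e ∈ E, x ≤ e ∧ e < y := by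
  unfold rowIdx
  constructor
  · intro hlt
    by_contra hno
    push_neg at hno
    have hsub : E.filter (fun e => e < y) ⊆ E.filter (fun e => e < x) := by
      intro e he
      simp only [Finset.mem_filter] at he ⊢
      refine ⟨he.1, ?_⟩
      by_contra hc
      exact absurd (hno e he.1 (by omega)) (by omega)
    have := Finset.card_le_card hsub
    omega
  · rintro ⟨e, heE, hxe, hey⟩
    have hss : E.filter (fun e => e < x) ⊂ E.filter (fun e => e < y) := by
      refine ⟨?_, fun hc => ?_⟩
      · intro f hf
        simp only [Finset.mem_filter] at hf ⊢
        exact ⟨hf.1, by omega⟩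
      · have := hc (Finset.mem_filter.mpr ⟨heE, hey⟩)
        simp only [Finset.mem_filter] at this
        omega
    have := Finset.card_lt_card hss
    omega

lemma rowIdx_union_singleton (D : Finset ℕ) (n : ℕ) (hn : n ∉ D) (x : ℕ) :
    rowIdx (D ∪ {n}) x = rowIdx D x + (if n < x then 1 else 0) := by
  unfold rowIdx
  rw [Finset.filter_union]
  rw [Finset.card_union_of_disjoint]
  · have : Finset.filter (fun e => e < x) ({n} : Finset ℕ)
        = if n < x then ({n} : Finset ℕ) else ∅ := by
      split <;> rename_i h
      · ext e; simp only [Finset.mem_filter, Finset.mem_singleton]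
        constructor
        · rintro ⟨rfl, -⟩; rfl
        · rintro rfl; exact ⟨rfl, h⟩
      · ext e; simp only [Finset.mem_filter, Finset.mem_singleton, Finset.notMem_empty,
          iff_false]
        rintro ⟨rfl, hc⟩; exact h hc
    rw [this]
    split <;> simp <;> omega
  · refine Finset.disjoint_left.mpr ?_
    intro e he hee
    simp only [Finset.mem_filter, Finset.mem_singleton] at he hee
    exact hn (hee.1 ▸ he.1)

/-- In the "swap" case of the 0-Hecke operator, structure of the result. -/
lemma swapcase {N : ℕ} (E : Finset ℕ) (w : Equiv.Perm (Fin N)) (a b : Fin N)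
    (hab : (a:ℕ) + 1 = b)
    (hr : rowIdx E (((w⁻¹ a : Fin N) : ℕ) + 1) < rowIdx E (((w⁻¹ b : Fin N) : ℕ) + 1)) :
    ((w⁻¹ a : Fin N) : ℕ) < ((w⁻¹ b : Fin N) : ℕ) ∧
    ((((w⁻¹ b : Fin N) : ℕ) = ((w⁻¹ a : Fin N) : ℕ) + 1
        ∧ (((w⁻¹ a : Fin N) : ℕ) + 1) ∈ E
        ∧ (((w⁻¹ a : Fin N) : ℕ) + 1) ∉ permDes w
        ∧ permDes (Equiv.swap a b * w) = insert (((w⁻¹ a : Fin N) : ℕ) + 1) (permDes w))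
      ∨ (((w⁻¹ a : Fin N) : ℕ) + 2 ≤ ((w⁻¹ b : Fin N) : ℕ)
        ∧ permDes (Equiv.swap a b * w) = permDes w)) := by
  obtain ⟨e, heE, he1, he2⟩ := (rowIdx_lt_iff E _ _).mp hr
  have hpq : ((w⁻¹ a : Fin N) : ℕ) < ((w⁻¹ b : Fin N) : ℕ) := by omega
  refine ⟨hpq, ?_⟩
  rcases eq_or_ne ((w⁻¹ b : Fin N) : ℕ) (((w⁻¹ a : Fin N) : ℕ) + 1) with hadj | hadj
  · obtain ⟨hnm, hins⟩ := permDes_swap_adj w a b hab hadj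
    have heq : e = ((w⁻¹ a : Fin N) : ℕ) + 1 := by omega
    exact Or.inl ⟨hadj, heq ▸ heE, hnm, hins⟩
  · refine Or.inr ⟨by omega, permDes_swap_nonadj w a b hab hadj (by omega)⟩

lemma chain_adj {N : ℕ} (w : Equiv.Perm (Fin N)) (a b : Fin N) (hab : (a:ℕ) + 1 = b)
    (hpq : ((w⁻¹ a : Fin N) : ℕ) < ((w⁻¹ b : Fin N) : ℕ))
    (hrow : rowIdx (permDes w) (((w⁻¹ a : Fin N) : ℕ) + 1)
        = rowIdx (permDes w) (((w⁻¹ b : Fin N) : ℕ) + 1)) :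
    ((w⁻¹ b : Fin N) : ℕ) = ((w⁻¹ a : Fin N) : ℕ) + 1 := by
  obtain ⟨p, hp⟩ : ∃ p : ℕ, ((w⁻¹ a : Fin N) : ℕ) = p := ⟨_, rfl⟩
  obtain ⟨q, hq0⟩ : ∃ q : ℕ, ((w⁻¹ b : Fin N) : ℕ) = q := ⟨_, rfl⟩
  rw [hp, hq0] at hpq hrow ⊢
  have hqN : q < N := hq0 ▸ (w⁻¹ b).isLt
  have hpN : p < N := hp ▸ (w⁻¹ a).isLt
  have hno : ∀ j, p < j → j ≤ q → j ∉ permDes w := by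
    intro j hj1 hj2 hmem
    have : rowIdx (permDes w) (p + 1) < rowIdx (permDes w) (q + 1) :=
      (rowIdx_lt_iff _ _ _).mpr ⟨j, hmem, by omega, by omega⟩
    omega
  by_contra hne
  have hq2 : p + 2 ≤ q := by omega
  have m1 : w ⟨p, hpN⟩ < w ⟨p + 1, by omega⟩ :=
    mono_of_no_descent w p (p + 1) (by omega) (by omega) (fun j u v => hno j u (by omega))
  have m2 : w ⟨p + 1, by omega⟩ < w ⟨q, hqN⟩ :=
    mono_of_no_descent w (p + 1) q hqN (by omega) (fun j u v => hno j (by omega) v)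
  have e1 : w ⟨p, hpN⟩ = a := by
    have : (⟨p, hpN⟩ : Fin N) = w⁻¹ a := by ext; exact hp.symm
    rw [this]; simp
  have e2 : w ⟨q, hqN⟩ = b := by
    have : (⟨q, hqN⟩ : Fin N) = w⁻¹ b := by ext; exact hq0.symm
    rw [this]; simp
  rw [e1, Fin.lt_def] at m1
  rw [e2, Fin.lt_def] at m2
  omega

lemma chain_notlt {N : ℕ} (w : Equiv.Perm (Fin N)) (a b : Fin N) (hab : (a:ℕ) + 1 = b)
    (hqp : ((w⁻¹ b : Fin N) : ℕ) < ((w⁻¹ a : Fin N) : ℕ))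
    (hrow : rowIdx (permDes w) (((w⁻¹ b : Fin N) : ℕ) + 1)
        = rowIdx (permDes w) (((w⁻¹ a : Fin N) : ℕ) + 1)) :
    False := by
  obtain ⟨p, hp⟩ : ∃ p : ℕ, ((w⁻¹ a : Fin N) : ℕ) = p := ⟨_, rfl⟩
  obtain ⟨q, hq0⟩ : ∃ q : ℕ, ((w⁻¹ b : Fin N) : ℕ) = q := ⟨_, rfl⟩
  rw [hp, hq0] at hqp hrow
  have hqN : q < N := hq0 ▸ (w⁻¹ b).isLt
  have hpN : p < N := hp ▸ (w⁻¹ a).isLt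
  have hno : ∀ j, q < j → j ≤ p → j ∉ permDes w := by
    intro j hj1 hj2 hmem
    have : rowIdx (permDes w) (q + 1) < rowIdx (permDes w) (p + 1) :=
      (rowIdx_lt_iff _ _ _).mpr ⟨j, hmem, by omega, by omega⟩
    omega
  have m1 : w ⟨q, hqN⟩ < w ⟨p, hpN⟩ := mono_of_no_descent w q p hpN hqp hno
  have e1 : w ⟨p, hpN⟩ = a := by
    have : (⟨p, hpN⟩ : Fin N) = w⁻¹ a := by ext; exact hp.symm
    rw [this]; simp
  have e2 : w ⟨q, hqN⟩ = b := by
    have : (⟨q, hqN⟩ : Fin N) = w⁻¹ b := by ext; exact hq0.symm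
    rw [this]; simp
  rw [e1, e2, Fin.lt_def] at m1
  omega

lemma pibarBasis_eq {N : ℕ} (E : Finset ℕ) (i : ℕ) (h1 : 1 ≤ i) (h2 : i < N)
    (w : Equiv.Perm (Fin N)) (a b : Fin N) (ha : (a : ℕ) = i - 1) (hb : (b : ℕ) = i) :
    pibarBasis N E i w =
      if rowIdx E (((w⁻¹ b : Fin N) : ℕ) + 1) < rowIdx E (((w⁻¹ a : Fin N) : ℕ) + 1)
      then - Finsupp.single w (1 : ℚ)
      else if rowIdx E (((w⁻¹ a : Fin N) : ℕ) + 1) = rowIdx E (((w⁻¹ b : Fin N) : ℕ) + 1)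
      then 0
      else Finsupp.single (Equiv.swap a b * w) (1 : ℚ) := by
  have ea : a = (⟨i - 1, by omega⟩ : Fin N) := by ext; simp [ha]
  have eb : b = (⟨i, h2⟩ : Fin N) := by ext; simp [hb]
  rw [ea, eb]
  unfold pibarBasis
  rw [dif_pos ⟨h1, h2⟩]

lemma pibarBasis_support_self {N : ℕ} (E : Finset ℕ) (i : ℕ) (w : Equiv.Perm (Fin N))
    (hw : permDes w = E) :
    ∀ u ∈ (pibarBasis N E i w).support, permDes u = E := by
  intro u hu
  by_cases h : 1 ≤ i ∧ i < N
  case neg =>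
    unfold pibarBasis at hu; rw [dif_neg h] at hu; simp at hu
  obtain ⟨h1, h2⟩ := h
  have hiN : i - 1 < N := by omega
  rw [pibarBasis_eq E i h1 h2 w ⟨i - 1, hiN⟩ ⟨i, h2⟩ rfl rfl] at hu
  have hab : ((⟨i - 1, hiN⟩ : Fin N) : ℕ) + 1 = (⟨i, h2⟩ : Fin N) := by simp; omega
  split_ifs at hu with c1 c2
  · simp only [Finsupp.support_neg, Finsupp.support_single_ne_zero _ (one_ne_zero),
      Finset.mem_singleton] at hu
    subst hu; exact hw
  · simp at hu
  · simp only [Finsupp.support_single_ne_zero _ (one_ne_zero), Finset.mem_singleton] at hu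
    subst hu
    have hr : rowIdx E (((w⁻¹ (⟨i - 1, hiN⟩ : Fin N) : Fin N) : ℕ) + 1)
        < rowIdx E (((w⁻¹ (⟨i, h2⟩ : Fin N) : Fin N) : ℕ) + 1) := by omega
    obtain ⟨-, hcase⟩ := swapcase E w _ _ hab hr
    rcases hcase with ⟨-, hmem, hnmem, -⟩ | ⟨-, heq⟩
    · rw [hw] at hnmem; exact absurd hmem hnmem
    · rw [heq, hw]

lemma pibarBasis_support_pair {N n : ℕ} (D : Finset ℕ) (hn : n ∉ D) (i : ℕ)
    (w : Equiv.Perm (Fin N)) (hw : permDes w \ {n} = D) :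
    ∀ u ∈ (pibarBasis N (D ∪ {n}) i w).support, permDes u \ {n} = D := by
  intro u hu
  by_cases h : 1 ≤ i ∧ i < N
  case neg =>
    unfold pibarBasis at hu; rw [dif_neg h] at hu; simp at hu
  obtain ⟨h1, h2⟩ := h
  have hiN : i - 1 < N := by omega
  rw [pibarBasis_eq (D ∪ {n}) i h1 h2 w ⟨i - 1, hiN⟩ ⟨i, h2⟩ rfl rfl] at hu
  have hab : ((⟨i - 1, hiN⟩ : Fin N) : ℕ) + 1 = (⟨i, h2⟩ : Fin N) := by simp; omega
  have hD : D ⊆ permDes w := by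
    intro d hd
    rw [← hw] at hd
    exact (Finset.mem_sdiff.mp hd).1
  split_ifs at hu with c1 c2
  · simp only [Finsupp.support_neg, Finsupp.support_single_ne_zero _ (one_ne_zero),
      Finset.mem_singleton] at hu
    subst hu; exact hw
  · simp at hu
  · simp only [Finsupp.support_single_ne_zero _ (one_ne_zero), Finset.mem_singleton] at hu
    subst hu
    have hr : rowIdx (D ∪ {n}) (((w⁻¹ (⟨i - 1, hiN⟩ : Fin N) : Fin N) : ℕ) + 1)
        < rowIdx (D ∪ {n}) (((w⁻¹ (⟨i, h2⟩ : Fin N) : Fin N) : ℕ) + 1) := by omega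
    obtain ⟨-, hcase⟩ := swapcase (D ∪ {n}) w _ _ hab hr
    rcases hcase with ⟨-, hmem, hnmem, hins⟩ | ⟨-, heq⟩
    · have hpn : ((w⁻¹ (⟨i - 1, hiN⟩ : Fin N) : Fin N) : ℕ) + 1 = n := by
        rcases Finset.mem_union.mp hmem with hd | hs
        · exact absurd (hD hd) hnmem
        · exact Finset.mem_singleton.mp hs
      rw [hins, hpn, ← hw]
      ext x
      simp only [Finset.mem_sdiff, Finset.mem_insert, Finset.mem_singleton]
      tauto
    · rw [heq, hw]

lemma muMap_single {N n : ℕ} (u : Equiv.Perm (Fin N)) (c : ℚ) :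
    muMap N n (Finsupp.single u c)
      = c • (if n ∈ permDes u then 0 else Finsupp.single u (1 : ℚ)) := by
  unfold muMap
  rw [Finsupp.lsum_single, LinearMap.toSpanSingleton_apply]

lemma pibar_single {N : ℕ} (E : Finset ℕ) (i : ℕ) (u : Equiv.Perm (Fin N)) (c : ℚ) :
    pibar N E i (Finsupp.single u c) = c • pibarBasis N E i u := by
  unfold pibar
  rw [Finsupp.lsum_single, LinearMap.toSpanSingleton_apply]

lemma pibar_apply {N : ℕ} (E : Finset ℕ) (i : ℕ) (x : QS N) :
    pibar N E i x = x.sum fun u c => c • pibarBasis N E i u := by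
  unfold pibar
  rw [Finsupp.lsum_apply]
  exact Finsupp.sum_congr fun u _ => LinearMap.toSpanSingleton_apply ℚ (QS N) _ _

lemma mu_pibar_basis {N n : ℕ} (D : Finset ℕ) (hn : n ∉ D) (i : ℕ)
    (w : Equiv.Perm (Fin N)) (hw : permDes w \ {n} = D) :
    muMap N n (pibarBasis N (D ∪ {n}) i w)
      = pibar N D i (muMap N n (Finsupp.single w (1 : ℚ))) := by
  rw [muMap_single, one_smul]
  by_cases h : 1 ≤ i ∧ i < N
  case neg =>
    have hz : ∀ (E : Finset ℕ), pibarBasis N E i w = 0 := by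
      intro E; unfold pibarBasis; rw [dif_neg h]
    rw [hz, map_zero]
    split
    · rw [map_zero]
    · rw [pibar_single, hz, smul_zero]
  obtain ⟨h1, h2⟩ := h
  have hiN : i - 1 < N := by omega
  have hD : D ⊆ permDes w := by
    intro d hd
    rw [← hw] at hd
    exact (Finset.mem_sdiff.mp hd).1
  have hab : ((⟨i - 1, hiN⟩ : Fin N) : ℕ) + 1 = ((⟨i, h2⟩ : Fin N) : ℕ) := by simp; omega
  rw [pibarBasis_eq (D ∪ {n}) i h1 h2 w ⟨i - 1, hiN⟩ ⟨i, h2⟩ rfl rfl]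
  by_cases hnw : n ∈ permDes w
  · rw [if_pos hnw, map_zero]
    split_ifs with c1 c2
    · rw [map_neg, muMap_single, if_pos hnw, smul_zero, neg_zero]
    · rw [map_zero]
    · rw [muMap_single]
      have hr : rowIdx (D ∪ {n}) (((w⁻¹ (⟨i - 1, hiN⟩ : Fin N) : Fin N) : ℕ) + 1)
          < rowIdx (D ∪ {n}) (((w⁻¹ (⟨i, h2⟩ : Fin N) : Fin N) : ℕ) + 1) := by omega
      obtain ⟨-, hcase⟩ := swapcase (D ∪ {n}) w _ _ hab hr
      rcases hcase with ⟨-, hmem, hnmem, -⟩ | ⟨-, heq⟩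
      · rcases Finset.mem_union.mp hmem with hd | hs
        · exact absurd (hD hd) hnmem
        · rw [Finset.mem_singleton] at hs
          rw [hs] at hnmem
          exact absurd hnw hnmem
      · rw [heq, if_pos hnw, smul_zero]
  · rw [if_neg hnw, pibar_single, one_smul]
    have hwD : permDes w = D := by
      rw [← hw]
      ext x
      simp only [Finset.mem_sdiff, Finset.mem_singleton]
      constructor
      · intro hx
        refine ⟨hx, ?_⟩
        rintro rfl
        exact hnw hx
      · exact fun hx => hx.1
    have hnegw : muMap N n (-Finsupp.single w (1 : ℚ)) = -Finsupp.single w (1 : ℚ) := by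
      rw [map_neg, muMap_single, if_neg hnw, one_smul]
    have hswapD : rowIdx D (((w⁻¹ (⟨i - 1, hiN⟩ : Fin N) : Fin N) : ℕ) + 1)
          < rowIdx D (((w⁻¹ (⟨i, h2⟩ : Fin N) : Fin N) : ℕ) + 1) →
        muMap N n (Finsupp.single (Equiv.swap (⟨i - 1, hiN⟩ : Fin N) (⟨i, h2⟩ : Fin N) * w)
            (1 : ℚ))
          = Finsupp.single (Equiv.swap (⟨i - 1, hiN⟩ : Fin N) (⟨i, h2⟩ : Fin N) * w)
            (1 : ℚ) := by
      intro hr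
      rw [muMap_single]
      obtain ⟨-, hcase⟩ := swapcase D w _ _ hab hr
      rcases hcase with ⟨-, hmem, hnmem, -⟩ | ⟨-, heq⟩
      · rw [← hwD] at hmem; exact absurd hmem hnmem
      · rw [heq, if_neg hnw, one_smul]
    rw [pibarBasis_eq D i h1 h2 w ⟨i - 1, hiN⟩ ⟨i, h2⟩ rfl rfl]
    have hadjcase : ∀ hquse : ((w⁻¹ (⟨i, h2⟩ : Fin N) : Fin N) : ℕ)
          = ((w⁻¹ (⟨i - 1, hiN⟩ : Fin N) : Fin N) : ℕ) + 1,
        n = ((w⁻¹ (⟨i - 1, hiN⟩ : Fin N) : Fin N) : ℕ) + 1 →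
        muMap N n (Finsupp.single (Equiv.swap (⟨i - 1, hiN⟩ : Fin N) (⟨i, h2⟩ : Fin N) * w)
            (1 : ℚ)) = 0 := by
      intro hquse hnval
      rw [muMap_single]
      obtain ⟨hnm, hins⟩ := permDes_swap_adj w ⟨i - 1, hiN⟩ ⟨i, h2⟩ (by simp; omega) hquse
      rw [if_pos (by rw [hins, hnval]; exact Finset.mem_insert_self _ _), smul_zero]
    obtain ⟨p, hp⟩ : ∃ p : ℕ, ((w⁻¹ (⟨i - 1, hiN⟩ : Fin N) : Fin N) : ℕ) = p := ⟨_, rfl⟩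
    obtain ⟨q, hq0⟩ : ∃ q : ℕ, ((w⁻¹ (⟨i, h2⟩ : Fin N) : Fin N) : ℕ) = q := ⟨_, rfl⟩
    have hpqne : p ≠ q := by
      intro e
      have hfe : (w⁻¹ (⟨i - 1, hiN⟩ : Fin N) : Fin N) = w⁻¹ (⟨i, h2⟩ : Fin N) :=
        Fin.ext (by rw [hp, hq0, e])
      have := (Equiv.injective w⁻¹) hfe
      rw [Fin.ext_iff] at this
      simp only [Fin.val_mk] at this
      omega
    have hABltpq : rowIdx D (p + 1) < rowIdx D (q + 1) → p < q := by
      intro hlt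
      obtain ⟨e, -, he1, he2⟩ := (rowIdx_lt_iff D _ _).mp hlt
      omega
    have hABltqp : rowIdx D (q + 1) < rowIdx D (p + 1) → q < p := by
      intro hlt
      obtain ⟨e, -, he1, he2⟩ := (rowIdx_lt_iff D _ _).mp hlt
      omega
    rw [hp, hq0] at hswapD hadjcase
    rw [hp, hq0, rowIdx_union_singleton D n hn (p + 1), rowIdx_union_singleton D n hn (q + 1)]
    rcases Nat.lt_or_ge n (p + 1) with hnp | hnp <;>
      rcases Nat.lt_or_ge n (q + 1) with hnq | hnq
    · -- εp = εq = 1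
      rw [if_pos hnp, if_pos hnq]
      rcases lt_trichotomy (rowIdx D (p + 1)) (rowIdx D (q + 1)) with hAB | hAB | hAB
      · rw [if_neg (by omega), if_neg (by omega), if_neg (by omega), if_neg (by omega)]
        exact hswapD hAB
      · rw [if_neg (by omega), if_pos (by omega), map_zero, if_neg (by omega), if_pos hAB]
      · rw [if_pos (by omega), if_pos hAB]
        exact hnegw
    · -- εp = 1, εq = 0 : q < n ≤ p
      rw [if_pos hnp, if_neg (Nat.not_lt.mpr hnq)]
      have hqp : q < p := by omega
      have hBA : rowIdx D (q + 1) ≤ rowIdx D (p + 1) := rowIdx_mono D (by omega)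
      rcases Nat.eq_or_lt_of_le hBA with hAB | hAB
      · exfalso
        exact chain_notlt w ⟨i - 1, hiN⟩ ⟨i, h2⟩ (by simp; omega)
          (by rw [hp, hq0]; omega) (by rw [hwD, hp, hq0]; omega)
      · rw [if_pos (by omega), if_pos hAB]
        exact hnegw
    · -- εp = 0, εq = 1 : p < n ≤ q
      rw [if_neg (Nat.not_lt.mpr hnp), if_pos hnq]
      have hpq : p < q := by omega
      have hAB' : rowIdx D (p + 1) ≤ rowIdx D (q + 1) := rowIdx_mono D (by omega)
      rcases Nat.eq_or_lt_of_le hAB' with hAB | hAB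
      · -- A = B : adjacent, n = p + 1
        have hadj : q = p + 1 := by
          have := chain_adj w ⟨i - 1, hiN⟩ ⟨i, h2⟩ (by simp; omega)
            (by rw [hp, hq0]; exact hpq) (by rw [hwD, hp, hq0]; omega)
          rw [hp, hq0] at this; exact this
        rw [if_neg (by omega), if_neg (by omega), if_neg (by omega), if_pos hAB]
        exact hadjcase hadj (by omega)
      · rw [if_neg (by omega), if_neg (by omega), if_neg (by omega), if_neg (by omega)]
        exact hswapD hAB
    · -- εp = εq = 0
      rw [if_neg (Nat.not_lt.mpr hnp), if_neg (Nat.not_lt.mpr hnq)]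
      rcases lt_trichotomy (rowIdx D (p + 1)) (rowIdx D (q + 1)) with hAB | hAB | hAB
      · rw [if_neg (by omega), if_neg (by omega), if_neg (by omega), if_neg (by omega)]
        exact hswapD hAB
      · rw [if_neg (by omega), if_pos (by omega), map_zero, if_neg (by omega), if_pos hAB]
      · rw [if_pos (by omega), if_pos hAB]
        exact hnegw

lemma pibar_mem_supported {N : ℕ} (E : Finset ℕ) (i : ℕ) (S : Set (Equiv.Perm (Fin N)))
    (hB : ∀ w ∈ S, ∀ u ∈ (pibarBasis N E i w).support, u ∈ S)
    (x : QS N) (hx : x ∈ Finsupp.supported ℚ ℚ S) :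
    pibar N E i x ∈ Finsupp.supported ℚ ℚ S := by
  rw [Finsupp.mem_supported] at hx ⊢
  rw [pibar_apply]
  intro u hu
  obtain ⟨w0, hw0, hu2⟩ := Finset.mem_biUnion.mp (Finsupp.support_sum hu)
  exact hB w0 (hx hw0) u (Finsupp.support_smul hu2)

lemma list_sum_pos' (l : List ℕ) (h : ∀ a ∈ l, 0 < a) (hne : l ≠ []) : 0 < l.sum := by
  cases l with
  | nil => exact absurd rfl hne
  | cons a t =>
    have := h a List.mem_cons_self
    simp only [List.sum_cons]
    omega

lemma Des_mem_bounds (α : List ℕ) (hp : ∀ a ∈ α, 0 < a) (d : ℕ) (hd : d ∈ Des α) :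
    1 ≤ d ∧ d < α.sum := by
  unfold Des at hd
  rw [List.mem_toFinset, List.mem_map] at hd
  obtain ⟨i, hi, rfl⟩ := hd
  rw [List.mem_range] at hi
  have hlen : i + 2 ≤ α.length := by omega
  have htake : (α.take (i + 1)).length = i + 1 := by
    rw [List.length_take]; omega
  have hdrop : (α.drop (i + 1)).length = α.length - (i + 1) := List.length_drop
  have htne : α.take (i + 1) ≠ [] := by
    intro e; rw [e] at htake; simp at htake
  have hdne : α.drop (i + 1) ≠ [] := by
    intro e; rw [e] at hdrop; simp at hdrop; omega
  have ht : 0 < (α.take (i + 1)).sum :=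
    list_sum_pos' _ (fun a ha => hp a (List.take_subset _ _ ha)) htne
  have hd2 : 0 < (α.drop (i + 1)).sum :=
    list_sum_pos' _ (fun a ha => hp a (List.drop_subset _ _ ha)) hdne
  have hsum : α.sum = (α.take (i + 1)).sum + (α.drop (i + 1)).sum := by
    rw [← List.sum_append, List.take_append_drop]
  omega

/-- with `N = n+m`, `D = Des(α) ∪ {n+d : d ∈ Des(β)}`, and the subspaces
`V_• , V_pair, V_⊙` of `ℚ[S_N]` spanned by the permutations with `Des(w) = D ∪ {n}`,
`Des(w) \ {n} = D`, and `Des(w) = D` respectively: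
(a) for every `i ∈ {1,…,N−1}`, `π̄ᵢ^{D∪{n}}` maps `V_•` into `V_•` and `V_pair` into
`V_pair`, and `π̄ᵢᴰ` maps `V_⊙` into `V_⊙`;
(b) `V_• ⊆ V_pair` (so the inclusion `∂ : V_• → V_pair` is defined and automatically
commutes with `π̄ᵢ^{D∪{n}}` by (a)), and `μ ∘ π̄ᵢ^{D∪{n}} = π̄ᵢᴰ ∘ μ` on `V_pair` for all
`i ∈ {1,…,N−1}`. -/
theorem hecke_equivariance_of_concat_maps (n m : ℕ) (hn : 1 ≤ n) (hm : 1 ≤ m)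
    (α β : List ℕ) (hαs : α.sum = n) (hαp : ∀ a ∈ α, 0 < a)
    (hβs : β.sum = m) (hβp : ∀ b ∈ β, 0 < b) :
    let D : Finset ℕ := Des α ∪ (Des β).image (fun d => n + d)
    let Vdot : Submodule ℚ (QS (n + m)) :=
      Finsupp.supported ℚ ℚ {w : Equiv.Perm (Fin (n + m)) | permDes w = D ∪ {n}}
    let Vpair : Submodule ℚ (QS (n + m)) :=
      Finsupp.supported ℚ ℚ {w : Equiv.Perm (Fin (n + m)) | permDes w \ {n} = D}
    let Vodot : Submodule ℚ (QS (n + m)) :=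
      Finsupp.supported ℚ ℚ {w : Equiv.Perm (Fin (n + m)) | permDes w = D}
    (∀ i ∈ Finset.Icc 1 (n + m - 1),
        (∀ x ∈ Vdot, pibar (n + m) (D ∪ {n}) i x ∈ Vdot)
        ∧ (∀ x ∈ Vpair, pibar (n + m) (D ∪ {n}) i x ∈ Vpair)
        ∧ (∀ x ∈ Vodot, pibar (n + m) D i x ∈ Vodot))
    ∧ Vdot ≤ Vpair
    ∧ (∀ i ∈ Finset.Icc 1 (n + m - 1), ∀ x ∈ Vpair,
        muMap (n + m) n (pibar (n + m) (D ∪ {n}) i x)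
          = pibar (n + m) D i (muMap (n + m) n x)) := by
  intro D Vdot Vpair Vodot
  have hnD : n ∉ D := by
    intro hd
    rcases Finset.mem_union.mp hd with h | h
    · have := Des_mem_bounds α hαp n h
      omega
    · rw [Finset.mem_image] at h
      obtain ⟨e, he, hne⟩ := h
      have := Des_mem_bounds β hβp e he
      omega
  refine ⟨?_, ?_, ?_⟩
  · intro i _
    refine ⟨?_, ?_, ?_⟩
    · exact fun x hx => pibar_mem_supported (D ∪ {n}) i _
        (fun w hw u hu => pibarBasis_support_self (D ∪ {n}) i w hw u hu) x hx
    · exact fun x hx => pibar_mem_supported (D ∪ {n}) i _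
        (fun w hw u hu => pibarBasis_support_pair D hnD i w hw u hu) x hx
    · exact fun x hx => pibar_mem_supported D i _
        (fun w hw u hu => pibarBasis_support_self D i w hw u hu) x hx
  · apply Finsupp.supported_mono
    intro w hw
    simp only [Set.mem_setOf_eq] at hw ⊢
    rw [hw]
    ext x
    simp only [Finset.mem_sdiff, Finset.mem_union, Finset.mem_singleton]
    constructor
    · rintro ⟨hx1 | hx2, hx3⟩
      · exact hx1
      · exact absurd hx2 hx3
    · intro hx
      refine ⟨Or.inl hx, ?_⟩
      rintro rfl
      exact hnD hx
  · intro i _ x hx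
    rw [Finsupp.mem_supported] at hx
    have e1 : muMap (n + m) n (pibar (n + m) (D ∪ {n}) i x)
        = x.sum fun w c => c • muMap (n + m) n (pibarBasis (n + m) (D ∪ {n}) i w) := by
      rw [pibar_apply, map_finsuppSum]
      exact Finsupp.sum_congr fun w _ => by rw [LinearMap.map_smul]
    have e0 : muMap (n + m) n x
        = x.sum fun w c => c • muMap (n + m) n (Finsupp.single w (1 : ℚ)) := by
      conv_lhs => rw [← Finsupp.sum_single x]
      rw [map_finsuppSum]
      refine Finsupp.sum_congr fun w _ => ?_
      rw [← LinearMap.map_smul, Finsupp.smul_single, smul_eq_mul, mul_one]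
    have e2 : pibar (n + m) D i (muMap (n + m) n x)
        = x.sum fun w c => c • pibar (n + m) D i (muMap (n + m) n (Finsupp.single w (1 : ℚ))) := by
      rw [e0, map_finsuppSum]
      exact Finsupp.sum_congr fun w _ => by rw [LinearMap.map_smul]
    rw [e1, e2]
    exact Finsupp.sum_congr fun w hwsupp => by
      rw [mu_pibar_basis D hnD i w (hx hwsupp)]
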